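/- arXiv:0710.2307 — 2 statements merged into one kernel-verified Lean document; each statement's English description precedes it below -/
import Mathlib

section
/- Let (X, μ) be a measure space, 2 ≤ p < ∞, q = p/(p-1), f ∈ L^p and g ∈ L^q with ‖f‖_p > 0 and ‖g‖_q > 0. Then ‖f‖_p‖g‖_q·(1 - (1/q)·‖|f|^{p/2}/‖f‖_p^{p/2} - |g|^{q/2}/‖g‖_q^{q/2}‖_2²) ≤ ‖fg‖_1 ≤ ‖f‖_p‖g‖_q·(1 - (1/p)·‖|f|^{p/2}/‖f‖_p^{p/2} - |g|^{q/2}/‖g‖_q^{q/2}‖_2²). -/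
/-!
The Mazur images `U = |f|^{p/2} / ‖f‖_p^{p/2}` and `V = |g|^{q/2} / ‖g‖_q^{q/2}` are nonnegative
unit vectors of `L²`, so `‖U - V‖₂² = 2 - 2 ∫ U V`, and `|f g| / (‖f‖_p ‖g‖_q) = U^s V^t` pointwise,
where `s = 2/p ≤ 1 ≤ t = 2/q` and `s + t = 2`. Weighted AM-GM for `u v` and `v²` gives
`u^s v^t ≤ (1 - s) v² + s u v`; weighted AM-GM for `u²` and `u^s v^t` with weights `1 - 1/t`, `1/t`
gives `(1 - t) u² + t u v ≤ u^s v^t`. Integrating these two pointwise bounds yields the theorem.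
-/

open MeasureTheory

namespace Real

lemma rpow_mul_rpow_le_of_add_eq_two {s t u v : ℝ} (hs0 : 0 ≤ s) (hs1 : s ≤ 1) (hst : s + t = 2)
    (hu : 0 ≤ u) (hv : 0 ≤ v) :
    u ^ s * v ^ t ≤ (1 - s) * v ^ 2 + s * (u * v) := by
  have hamgm := geom_mean_le_arith_mean2_weighted (p₁ := u * v) (p₂ := v ^ 2)
    hs0 (sub_nonneg.2 hs1) (mul_nonneg hu hv) (sq_nonneg v) (add_sub_cancel s 1)
  have hgeom : (u * v) ^ s * (v ^ 2) ^ (1 - s) = u ^ s * v ^ t := by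
    rw [mul_rpow hu hv, ← rpow_two, ← rpow_mul hv, mul_assoc,
      ← rpow_add' hv (by linarith)]
    congr 2
    linarith
  linarith

lemma le_rpow_mul_rpow_of_add_eq_two {s t u v : ℝ} (ht1 : 1 ≤ t) (hst : s + t = 2)
    (hu : 0 ≤ u) (hv : 0 ≤ v) :
    (1 - t) * u ^ 2 + t * (u * v) ≤ u ^ s * v ^ t := by
  have ht0 : 0 < t := by linarith
  have hamgm := geom_mean_le_arith_mean2_weighted (p₁ := u ^ 2) (p₂ := u ^ s * v ^ t)
    (sub_nonneg.2 (inv_le_one_of_one_le₀ ht1)) (inv_nonneg.2 ht0.le) (sq_nonneg u)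
    (by positivity) (sub_add_cancel 1 t⁻¹)
  have hexp : 2 * (1 - t⁻¹) + s * t⁻¹ = 1 := by
    field_simp
    linarith
  have hgeom : (u ^ 2) ^ (1 - t⁻¹) * (u ^ s * v ^ t) ^ t⁻¹ = u * v := by
    rw [mul_rpow (by positivity) (by positivity), rpow_rpow_inv hv ht0.ne',
      ← rpow_two, ← rpow_mul hu, ← rpow_mul hu, ← mul_assoc,
      ← rpow_add' hu (by rw [hexp]; exact one_ne_zero), hexp, rpow_one]
  have hscaled := mul_le_mul_of_nonneg_left (hgeom ▸ hamgm) ht0.le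
  have hexpand : t * ((1 - t⁻¹) * u ^ 2 + t⁻¹ * (u ^ s * v ^ t))
      = (t - 1) * u ^ 2 + u ^ s * v ^ t := by
    field_simp
  linarith

end Real

namespace MeasureTheory

variable {X : Type*} [MeasurableSpace X] {μ : Measure X}

theorem MemLp.toReal_eLpNorm_ofReal_rpow {p : ℝ} {f : X → ℝ} (hf : MemLp f (ENNReal.ofReal p) μ)
    (hp : 0 < p) : (eLpNorm f (ENNReal.ofReal p) μ).toReal ^ p = ∫ x, |f x| ^ p ∂μ := by
  rw [hf.eLpNorm_eq_integral_rpow_norm (by simpa using hp) ENNReal.ofReal_ne_top,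
    ENNReal.toReal_ofReal hp.le, ENNReal.toReal_ofReal (by positivity),
    Real.rpow_inv_rpow (integral_nonneg fun x => by positivity) hp.ne']
  simp only [Real.norm_eq_abs]

theorem MemLp.toReal_eLpNorm_two_sq {f : X → ℝ} (hf : MemLp f 2 μ) :
    (eLpNorm f 2 μ).toReal ^ 2 = ∫ x, f x ^ 2 ∂μ := by
  rw [← ENNReal.ofReal_ofNat] at hf ⊢
  rw [← Real.rpow_two, hf.toReal_eLpNorm_ofReal_rpow two_pos]
  simp only [Real.rpow_two, sq_abs]

theorem toReal_eLpNorm_sub_sq {U V : X → ℝ} (hU : MemLp U 2 μ) (hV : MemLp V 2 μ) :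
    (eLpNorm (U - V) 2 μ).toReal ^ 2
      = ∫ x, U x ^ 2 ∂μ + ∫ x, V x ^ 2 ∂μ - 2 * ∫ x, U x * V x ∂μ := by
  have hUV : Integrable (fun x => U x * V x) μ := hU.integrable_mul hV
  have hexpand : ∀ x, (U - V) x ^ 2 = U x ^ 2 + V x ^ 2 - 2 * (U x * V x) := fun x => by
    simp only [Pi.sub_apply]
    ring
  rw [(hU.sub hV).toReal_eLpNorm_two_sq, integral_congr_ae (ae_of_all _ hexpand), integral_sub,
    integral_add hU.integrable_sq hV.integrable_sq, integral_const_mul]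
  · exact hU.integrable_sq.add hV.integrable_sq
  · exact hUV.const_mul 2

noncomputable def mazurMap (μ : Measure X) (p : ℝ) (f : X → ℝ) (x : X) : ℝ :=
  |f x| ^ (p / 2) / (eLpNorm f (ENNReal.ofReal p) μ).toReal ^ (p / 2)

lemma mazurMap_nonneg (p : ℝ) (f : X → ℝ) (x : X) : 0 ≤ mazurMap μ p f x := by
  unfold mazurMap
  positivity

lemma mazurMap_rpow {p : ℝ} (hp : 0 < p) (f : X → ℝ) (x : X) :
    mazurMap μ p f x ^ (2 / p) = |f x| / (eLpNorm f (ENNReal.ofReal p) μ).toReal := by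
  have h2p : 2 / p = (p / 2)⁻¹ := by rw [inv_div]
  rw [mazurMap, ← Real.div_rpow (abs_nonneg _) ENNReal.toReal_nonneg, h2p,
    Real.rpow_rpow_inv (by positivity) (by positivity)]

lemma mazurMap_sq {p : ℝ} (f : X → ℝ) (x : X) :
    mazurMap μ p f x ^ 2 = |f x| ^ p / (eLpNorm f (ENNReal.ofReal p) μ).toReal ^ p := by
  rw [mazurMap, div_pow, ← Real.rpow_mul_natCast (abs_nonneg _),
    ← Real.rpow_mul_natCast ENNReal.toReal_nonneg]
  norm_num

theorem MemLp.memLp_mazurMap {p : ℝ} {f : X → ℝ} (hf : MemLp f (ENNReal.ofReal p) μ)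
    (hp : 0 < p) : MemLp (mazurMap μ p f) 2 μ := by
  have hhalf := hf.norm_rpow_div (ENNReal.ofReal (p / 2))
  rw [ENNReal.toReal_ofReal (by positivity), ← ENNReal.ofReal_div_of_pos (by positivity),
    div_div_cancel₀ hp.ne', ENNReal.ofReal_ofNat] at hhalf
  show MemLp (fun x => mazurMap μ p f x) 2 μ
  simpa only [mazurMap, Real.norm_eq_abs, div_eq_mul_inv, mul_comm] using
    hhalf.const_mul ((eLpNorm f (ENNReal.ofReal p) μ).toReal ^ (p / 2))⁻¹

theorem MemLp.integral_mazurMap_sq {p : ℝ} {f : X → ℝ} (hf : MemLp f (ENNReal.ofReal p) μ)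
    (hp : 0 < p) (hf0 : 0 < (eLpNorm f (ENNReal.ofReal p) μ).toReal) :
    ∫ x, mazurMap μ p f x ^ 2 ∂μ = 1 := by
  simp only [mazurMap_sq]
  rw [integral_div, ← hf.toReal_eLpNorm_ofReal_rpow hp, div_self (by positivity)]

theorem toReal_eLpNorm_one_mul_eq_integral_mazurMap {p q : ℝ} {f g : X → ℝ}
    (hfg : AEStronglyMeasurable (fun x => f x * g x) μ) (hp : 0 < p) (hq : 0 < q)
    (hf0 : 0 < (eLpNorm f (ENNReal.ofReal p) μ).toReal)
    (hg0 : 0 < (eLpNorm g (ENNReal.ofReal q) μ).toReal) :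
    (eLpNorm (fun x => f x * g x) 1 μ).toReal
      = (eLpNorm f (ENNReal.ofReal p) μ).toReal * (eLpNorm g (ENNReal.ofReal q) μ).toReal *
        ∫ x, mazurMap μ p f x ^ (2 / p) * mazurMap μ q g x ^ (2 / q) ∂μ := by
  rw [eLpNorm_one_eq_lintegral_enorm, ← integral_norm_eq_lintegral_enorm hfg,
    ← integral_const_mul]
  congr 1 with x
  rw [mazurMap_rpow hp, mazurMap_rpow hq, Real.norm_eq_abs, abs_mul, div_mul_div_comm,
    mul_div_cancel₀ _ (mul_pos hf0 hg0).ne']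

section UnitSphere

variable {U V : X → ℝ} {s t : ℝ}

theorem integrable_rpow_mul_rpow (hU : MemLp U 2 μ) (hV : MemLp V 2 μ)
    (hU0 : ∀ x, 0 ≤ U x) (hV0 : ∀ x, 0 ≤ V x) (hs0 : 0 ≤ s) (hs1 : s ≤ 1) (hst : s + t = 2) :
    Integrable (fun x => U x ^ s * V x ^ t) μ := by
  have hbound : Integrable (fun x => (1 - s) * V x ^ 2 + s * (U x * V x)) μ :=
    (hV.integrable_sq.const_mul _).add ((hU.integrable_mul hV).const_mul _)
  refine hbound.mono' ((hU.1.aemeasurable.pow_const s).mul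
    (hV.1.aemeasurable.pow_const t)).aestronglyMeasurable (ae_of_all _ fun x => ?_)
  rw [Real.norm_of_nonneg (by have := hU0 x; have := hV0 x; positivity)]
  exact Real.rpow_mul_rpow_le_of_add_eq_two hs0 hs1 hst (hU0 x) (hV0 x)

theorem integral_rpow_mul_rpow_le (hU : MemLp U 2 μ) (hV : MemLp V 2 μ)
    (hU0 : ∀ x, 0 ≤ U x) (hV0 : ∀ x, 0 ≤ V x)
    (hU1 : ∫ x, U x ^ 2 ∂μ = 1) (hV1 : ∫ x, V x ^ 2 ∂μ = 1)
    (hs0 : 0 ≤ s) (hs1 : s ≤ 1) (hst : s + t = 2) :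
    ∫ x, U x ^ s * V x ^ t ∂μ ≤ 1 - s / 2 * (eLpNorm (U - V) 2 μ).toReal ^ 2 := by
  have hUV : Integrable (fun x => U x * V x) μ := hU.integrable_mul hV
  calc ∫ x, U x ^ s * V x ^ t ∂μ
      ≤ ∫ x, (1 - s) * V x ^ 2 + s * (U x * V x) ∂μ :=
        integral_mono (integrable_rpow_mul_rpow hU hV hU0 hV0 hs0 hs1 hst)
          ((hV.integrable_sq.const_mul _).add (hUV.const_mul _))
          fun x => Real.rpow_mul_rpow_le_of_add_eq_two hs0 hs1 hst (hU0 x) (hV0 x)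
    _ = 1 - s / 2 * (eLpNorm (U - V) 2 μ).toReal ^ 2 := by
        rw [toReal_eLpNorm_sub_sq hU hV, hU1, hV1, integral_add (hV.integrable_sq.const_mul _)
          (hUV.const_mul _), integral_const_mul, integral_const_mul, hV1]
        ring

theorem le_integral_rpow_mul_rpow (hU : MemLp U 2 μ) (hV : MemLp V 2 μ)
    (hU0 : ∀ x, 0 ≤ U x) (hV0 : ∀ x, 0 ≤ V x)
    (hU1 : ∫ x, U x ^ 2 ∂μ = 1) (hV1 : ∫ x, V x ^ 2 ∂μ = 1)
    (hs0 : 0 ≤ s) (hs1 : s ≤ 1) (hst : s + t = 2) :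
    1 - t / 2 * (eLpNorm (U - V) 2 μ).toReal ^ 2 ≤ ∫ x, U x ^ s * V x ^ t ∂μ := by
  have hUV : Integrable (fun x => U x * V x) μ := hU.integrable_mul hV
  calc 1 - t / 2 * (eLpNorm (U - V) 2 μ).toReal ^ 2
      = ∫ x, (1 - t) * U x ^ 2 + t * (U x * V x) ∂μ := by
        rw [toReal_eLpNorm_sub_sq hU hV, hU1, hV1, integral_add (hU.integrable_sq.const_mul _)
          (hUV.const_mul _), integral_const_mul, integral_const_mul, hU1]
        ring
    _ ≤ ∫ x, U x ^ s * V x ^ t ∂μ :=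
        integral_mono ((hU.integrable_sq.const_mul _).add (hUV.const_mul _))
          (integrable_rpow_mul_rpow hU hV hU0 hV0 hs0 hs1 hst)
          fun x => Real.le_rpow_mul_rpow_of_add_eq_two (by linarith) hst (hU0 x) (hV0 x)

end UnitSphere

end MeasureTheory

theorem stmt_6 {X : Type*} [MeasurableSpace X] (μ : Measure X)
    (p q : ℝ) (hp : 2 ≤ p) (hq : q = p / (p - 1))
    (f g : X → ℝ)
    (hf : MemLp f (ENNReal.ofReal p) μ) (hg : MemLp g (ENNReal.ofReal q) μ)
    (hf0 : 0 < (eLpNorm f (ENNReal.ofReal p) μ).toReal)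
    (hg0 : 0 < (eLpNorm g (ENNReal.ofReal q) μ).toReal) :
    (eLpNorm f (ENNReal.ofReal p) μ).toReal * (eLpNorm g (ENNReal.ofReal q) μ).toReal *
        (1 - (1 / q) *
          (eLpNorm (fun x =>
              |f x| ^ (p / 2) / (eLpNorm f (ENNReal.ofReal p) μ).toReal ^ (p / 2) -
              |g x| ^ (q / 2) / (eLpNorm g (ENNReal.ofReal q) μ).toReal ^ (q / 2)) 2 μ).toReal ^ 2) ≤
      (eLpNorm (fun x => f x * g x) 1 μ).toReal ∧
    (eLpNorm (fun x => f x * g x) 1 μ).toReal ≤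
      (eLpNorm f (ENNReal.ofReal p) μ).toReal * (eLpNorm g (ENNReal.ofReal q) μ).toReal *
        (1 - (1 / p) *
          (eLpNorm (fun x =>
              |f x| ^ (p / 2) / (eLpNorm f (ENNReal.ofReal p) μ).toReal ^ (p / 2) -
              |g x| ^ (q / 2) / (eLpNorm g (ENNReal.ofReal q) μ).toReal ^ (q / 2)) 2 μ).toReal ^ 2) := by
  have hpq : p.HolderConjugate q := (Real.holderConjugate_iff_eq_conjExponent (by linarith)).2 hq
  have hp0 := hpq.pos
  have hq0 := hpq.symm.pos
  set a := (eLpNorm f (ENNReal.ofReal p) μ).toReal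
  set b := (eLpNorm g (ENNReal.ofReal q) μ).toReal
  change a * b * (1 - 1 / q * (eLpNorm (mazurMap μ p f - mazurMap μ q g) 2 μ).toReal ^ 2) ≤ _ ∧
    _ ≤ a * b * (1 - 1 / p * (eLpNorm (mazurMap μ p f - mazurMap μ q g) 2 μ).toReal ^ 2)
  have hst : 2 / p + 2 / q = 2 := by
    have := hpq.inv_add_inv_eq_one
    field_simp at this ⊢
    linarith
  have hs1 : 2 / p ≤ 1 := by rw [div_le_one hp0]; exact hp
  have hU := hf.memLp_mazurMap hp0
  have hV := hg.memLp_mazurMap hq0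
  have hU1 := hf.integral_mazurMap_sq hp0 hf0
  have hV1 := hg.integral_mazurMap_sq hq0 hg0
  have hs0 : 0 ≤ 2 / p := by positivity
  rw [toReal_eLpNorm_one_mul_eq_integral_mazurMap (hf.1.mul hg.1) hp0 hq0 hf0 hg0,
    show 1 / q = 2 / q / 2 by ring, show 1 / p = 2 / p / 2 by ring]
  constructor
  · exact mul_le_mul_of_nonneg_left (le_integral_rpow_mul_rpow hU hV (mazurMap_nonneg p f)
      (mazurMap_nonneg q g) hU1 hV1 hs0 hs1 hst) (by positivity)
  · exact mul_le_mul_of_nonneg_left (integral_rpow_mul_rpow_le hU hV (mazurMap_nonneg p f)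
      (mazurMap_nonneg q g) hU1 hV1 hs0 hs1 hst) (by positivity)
end

section
/- Let 1 ≤ p < ∞, 0 < t < 1, and let f, h ∈ L^p be real-valued with ‖|f| - |h|‖_p^p < t·‖f - h‖_p^p. Then ‖f + h‖_p^p < (‖f‖_p + ‖h‖_p)^p - (1 - t)·‖f - h‖_p^p. -/
/-! The pointwise identity `|u + v|^p + |u - v|^p = (|u| + |v|)^p + ||u| - |v||^p` integrates to
`‖f + h‖ₚᵖ + ‖f - h‖ₚᵖ = ‖|f| + |h|‖ₚᵖ + ‖|f| - |h|‖ₚᵖ`. Bounding `‖|f| + |h|‖ₚ ≤ ‖f‖ₚ + ‖h‖ₚ` by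
Minkowski and `‖|f| - |h|‖ₚᵖ < t ‖f - h‖ₚᵖ` by hypothesis gives the claim. -/

open MeasureTheory

lemma abs_add_rpow_add_abs_sub_rpow (p u v : ℝ) :
    |u + v| ^ p + |u - v| ^ p = (|u| + |v|) ^ p + |(|u| - |v|)| ^ p := by
  have : (|u + v| = |u| + |v| ∧ |u - v| = |(|u| - |v|)|) ∨
      (|u + v| = |(|u| - |v|)| ∧ |u - v| = |u| + |v|) := by
    grind [abs_of_nonneg, abs_of_nonpos]
  rcases this with ⟨hadd, hsub⟩ | ⟨hadd, hsub⟩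
  · rw [hadd, hsub]
  · rw [hadd, hsub, add_comm]

namespace MeasureTheory

variable {X : Type*} [MeasurableSpace X] {μ : Measure X} {p : ℝ}

lemma MemLp.toReal_eLpNorm_rpow_eq_integral {E : Type*} [NormedAddCommGroup E] {g : X → E}
    (hp : 0 < p) (hg : MemLp g (ENNReal.ofReal p) μ) :
    (eLpNorm g (ENNReal.ofReal p) μ).toReal ^ p = ∫ x, ‖g x‖ ^ p ∂μ := by
  have hp' : (ENNReal.ofReal p).toReal = p := ENNReal.toReal_ofReal hp.le
  have hint : 0 ≤ ∫ x, ‖g x‖ ^ p ∂μ := integral_nonneg fun x => by positivity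
  rw [hg.eLpNorm_eq_integral_rpow_norm (by simpa using hp) ENNReal.ofReal_ne_top, hp',
    ENNReal.toReal_ofReal (by positivity), Real.rpow_inv_rpow hint hp.ne']

lemma MemLp.integrable_norm_rpow_ofReal {E : Type*} [NormedAddCommGroup E] {g : X → E}
    (hp : 0 < p) (hg : MemLp g (ENNReal.ofReal p) μ) : Integrable (fun x => ‖g x‖ ^ p) μ := by
  simpa [ENNReal.toReal_ofReal hp.le] using
    hg.integrable_norm_rpow (by simpa using hp) ENNReal.ofReal_ne_top

lemma toReal_eLpNorm_add_rpow_add_toReal_eLpNorm_sub_rpow {f h : X → ℝ} (hp : 0 < p)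
    (hf : MemLp f (ENNReal.ofReal p) μ) (hh : MemLp h (ENNReal.ofReal p) μ) :
    (eLpNorm (f + h) (ENNReal.ofReal p) μ).toReal ^ p +
        (eLpNorm (f - h) (ENNReal.ofReal p) μ).toReal ^ p =
      (eLpNorm (fun x => |f x| + |h x|) (ENNReal.ofReal p) μ).toReal ^ p +
        (eLpNorm (fun x => |f x| - |h x|) (ENNReal.ofReal p) μ).toReal ^ p := by
  have hadd := hf.add hh
  have hsub := hf.sub hh
  have habs_add : MemLp (fun x => |f x| + |h x|) (ENNReal.ofReal p) μ := hf.abs.add hh.abs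
  have habs_sub : MemLp (fun x => |f x| - |h x|) (ENNReal.ofReal p) μ := hf.abs.sub hh.abs
  rw [hadd.toReal_eLpNorm_rpow_eq_integral hp, hsub.toReal_eLpNorm_rpow_eq_integral hp,
    habs_add.toReal_eLpNorm_rpow_eq_integral hp, habs_sub.toReal_eLpNorm_rpow_eq_integral hp,
    ← integral_add (hadd.integrable_norm_rpow_ofReal hp) (hsub.integrable_norm_rpow_ofReal hp),
    ← integral_add (habs_add.integrable_norm_rpow_ofReal hp)
      (habs_sub.integrable_norm_rpow_ofReal hp)]
  refine integral_congr_ae (.of_forall fun x => ?_)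
  simp only [Pi.add_apply, Pi.sub_apply, Real.norm_eq_abs,
    abs_of_nonneg (add_nonneg (abs_nonneg (f x)) (abs_nonneg (h x)))]
  exact abs_add_rpow_add_abs_sub_rpow p (f x) (h x)

lemma toReal_eLpNorm_abs_add_abs_le {f h : X → ℝ} (hp : 1 ≤ p)
    (hf : MemLp f (ENNReal.ofReal p) μ) (hh : MemLp h (ENNReal.ofReal p) μ) :
    (eLpNorm (fun x => |f x| + |h x|) (ENNReal.ofReal p) μ).toReal ≤
      (eLpNorm f (ENNReal.ofReal p) μ).toReal + (eLpNorm h (ENNReal.ofReal p) μ).toReal := by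
  rw [← ENNReal.toReal_add hf.eLpNorm_ne_top hh.eLpNorm_ne_top]
  refine ENNReal.toReal_mono (ENNReal.add_ne_top.mpr ⟨hf.eLpNorm_ne_top, hh.eLpNorm_ne_top⟩) ?_
  calc eLpNorm (fun x => |f x| + |h x|) (ENNReal.ofReal p) μ
      ≤ eLpNorm (fun x => |f x|) (ENNReal.ofReal p) μ +
          eLpNorm (fun x => |h x|) (ENNReal.ofReal p) μ :=
        eLpNorm_add_le hf.abs.aestronglyMeasurable hh.abs.aestronglyMeasurable
          (ENNReal.one_le_ofReal.mpr hp)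
    _ = eLpNorm f (ENNReal.ofReal p) μ + eLpNorm h (ENNReal.ofReal p) μ := by
        simp_rw [← Real.norm_eq_abs, eLpNorm_norm]

end MeasureTheory

theorem stmt_17_general {X : Type*} [MeasurableSpace X] (μ : Measure X)
    (p t : ℝ) (hp : 1 ≤ p)
    (f h : X → ℝ)
    (hf : MemLp f (ENNReal.ofReal p) μ) (hh : MemLp h (ENNReal.ofReal p) μ)
    (hsmall : (eLpNorm (fun x => |f x| - |h x|) (ENNReal.ofReal p) μ).toReal ^ p <
      t * (eLpNorm (f - h) (ENNReal.ofReal p) μ).toReal ^ p) :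
    (eLpNorm (f + h) (ENNReal.ofReal p) μ).toReal ^ p <
      ((eLpNorm f (ENNReal.ofReal p) μ).toReal + (eLpNorm h (ENNReal.ofReal p) μ).toReal) ^ p -
        (1 - t) * (eLpNorm (f - h) (ENNReal.ofReal p) μ).toReal ^ p := by
  have hp0 : 0 < p := zero_lt_one.trans_le hp
  have hid := toReal_eLpNorm_add_rpow_add_toReal_eLpNorm_sub_rpow hp0 hf hh
  have htri : (eLpNorm (fun x => |f x| + |h x|) (ENNReal.ofReal p) μ).toReal ^ p ≤
      ((eLpNorm f (ENNReal.ofReal p) μ).toReal + (eLpNorm h (ENNReal.ofReal p) μ).toReal) ^ p :=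
    Real.rpow_le_rpow ENNReal.toReal_nonneg (toReal_eLpNorm_abs_add_abs_le hp hf hh) hp0.le
  linarith

theorem stmt_17 {X : Type*} [MeasurableSpace X] (μ : Measure X)
    (p t : ℝ) (hp : 1 ≤ p) (ht0 : 0 < t) (ht1 : t < 1)
    (f h : X → ℝ)
    (hf : MemLp f (ENNReal.ofReal p) μ) (hh : MemLp h (ENNReal.ofReal p) μ)
    (hsmall : (eLpNorm (fun x => |f x| - |h x|) (ENNReal.ofReal p) μ).toReal ^ p <
      t * (eLpNorm (f - h) (ENNReal.ofReal p) μ).toReal ^ p) :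
    (eLpNorm (f + h) (ENNReal.ofReal p) μ).toReal ^ p <
      ((eLpNorm f (ENNReal.ofReal p) μ).toReal + (eLpNorm h (ENNReal.ofReal p) μ).toReal) ^ p -
        (1 - t) * (eLpNorm (f - h) (ENNReal.ofReal p) μ).toReal ^ p :=
  stmt_17_general μ p t hp f h hf hh hsmall
end
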